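/- Let X be a type, f : X → X → X a binary operation (written x ⊛ y), g : X → X → X, and h : X → X → X → X satisfying (1) for all r, r', c in X, h (g r c) r r' = g r' c, and (2) for all x, y, r, r' in X, h (x ⊛ y) r r' = (h x r r') ⊛ (h y r r'). Let r, c : ℕ → X and define T : ℕ → X by T 0 = g (r 0) (c 0) and T (j+1) = (h (T j) (r j) (r (j+1))) ⊛ g (r (j+1)) (c (j+1)). Then for every n, T n = g (r n) (c 0) ⊛ g (r n) (c 1) ⊛ … ⊛ g (r n) (c n) (left-associated fold); i.e., the final value of the repaired fused loop equals the value computed by the original unfused program, in which the inner reduction result r n is fully computed before the outer reduction over g-terms. -/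
import Mathlib

lemma h_foldl {X : Type*} (f : X → X → X) (h : X → X → X → X)
    (h2 : ∀ x y r r' : X, h (f x y) r r' = f (h x r r') (h y r r'))
    (r r' : X) : ∀ (l : List X) (b : X),
    h (l.foldl f b) r r' = (l.map (fun a => h a r r')).foldl f (h b r r') := by
  intro l
  induction l with
  | nil => intro b; simp
  | cons a t ih => intro b; simp [ih, h2]

/-- Theorems 4.4 + 4.5: the final value of the repaired fused loop equals the value
computed by the original unfused program. -/
theorem rolling_update_correct {X : Type*} (f g : X → X → X) (h : X → X → X → X)
    (h1 : ∀ r r' c : X, h (g r c) r r' = g r' c)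
    (h2 : ∀ x y r r' : X, h (f x y) r r' = f (h x r r') (h y r r'))
    (r c : ℕ → X) (T : ℕ → X)
    (hT0 : T 0 = g (r 0) (c 0))
    (hTs : ∀ j, T (j + 1) = f (h (T j) (r j) (r (j + 1))) (g (r (j + 1)) (c (j + 1)))) :
    ∀ n, T n = ((List.range n).map (fun i => g (r n) (c (i + 1)))).foldl f (g (r n) (c 0)) := by
  intro n
  induction n with
  | zero => simpa using hT0
  | succ j ih =>
    rw [hTs, ih, h_foldl f h h2, h1, List.map_map, List.range_succ]
    simp [Function.comp_def, h1]
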